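/- arXiv:1705.08715 — 8 statements merged into one kernel-verified Lean document; each statement's English description precedes it below -/
import Mathlib

section
/- Let p be a path on a set X with dom p = ↓σ for a word σ ∈ A_τ*, and let φ be the stutter basis for p. Then the image φ(↓σ) equals ↓(φ(σ)), the set of all prefixes of the word φ(σ). -/
open scoped Classical ENNReal

namespace PaperBB

/-! ## Paths -/

/-- Words over the alphabet `A_τ = A ∪ {τ}`; `none` plays the role of the silent action `τ`. -/
abbrev Word (A : Type*) := List (Option A)

/-- A path on `X`: a function whose codomain is `X` and whose domain is the set of all
prefixes of some word `σ ∈ A_τ*`. -/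
structure Path (A : Type*) (X : Type*) where
  word : Word A
  fn : {σ : Word A // σ <+: word} → X

namespace Path

variable {A X Y : Type*}

theorem prefixSnoc (σ : Word A) (a : Option A) : σ <+: σ ++ [a] := ⟨[a], rfl⟩

theorem nilPrefix (w : Word A) : ([] : Word A) <+: w := ⟨w, rfl⟩

/-- The value `p(ε)` of a path at the empty word. -/
def start (p : Path A X) : X := p.fn ⟨[], nilPrefix _⟩

/-- The trace of a path: the maximal word in its domain. -/
def trace (p : Path A X) : Word A := p.word

/-- The last state reached by a path: `last p = p (trace p)`. -/
def last (p : Path A X) : X := p.fn ⟨p.word, List.prefix_refl _⟩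

/-- `Path(f)(p) = f ∘ p`. -/
def map (f : X → Y) (p : Path A X) : Path A Y := ⟨p.word, fun σ => f (p.fn σ)⟩

/-- The prefix order on paths: `p ⪯ q` iff `dom p ⊆ dom q` and `q` agrees with `p` on `dom p`. -/
def le (p q : Path A X) : Prop :=
  ∃ h : p.word <+: q.word, ∀ (σ : Word A) (hσ : σ <+: p.word),
    q.fn ⟨σ, hσ.trans h⟩ = p.fn ⟨σ, hσ⟩

/-- The strict prefix order on paths. -/
def lt (p q : Path A X) : Prop := p.le q ∧ p ≠ q

/-- `φ` is a stutter basis for the path `p`. -/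
def IsStutterBasis (p : Path A X) (φ : {σ : Word A // σ <+: p.word} → Word A) : Prop :=
  φ ⟨[], nilPrefix _⟩ = [] ∧
  (∀ (σ : Word A) (h : σ ++ [(none : Option A)] <+: p.word),
      (p.fn ⟨σ ++ [none], h⟩ = p.fn ⟨σ, (prefixSnoc σ none).trans h⟩ →
        φ ⟨σ ++ [none], h⟩ = φ ⟨σ, (prefixSnoc σ none).trans h⟩) ∧
      (p.fn ⟨σ ++ [none], h⟩ ≠ p.fn ⟨σ, (prefixSnoc σ none).trans h⟩ →
        φ ⟨σ ++ [none], h⟩ = φ ⟨σ, (prefixSnoc σ none).trans h⟩ ++ [none])) ∧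
  (∀ (σ : Word A) (a : A) (h : σ ++ [some a] <+: p.word),
      φ ⟨σ ++ [some a], h⟩ = φ ⟨σ, (prefixSnoc σ (some a)).trans h⟩ ++ [some a])

/-- Auxiliary recursion computing the stutter basis of `p` on the prefix of length `n`. -/
noncomputable def stutterWordAux (p : Path A X) : ℕ → Word A
  | 0 => []
  | n + 1 =>
    if h : n < p.word.length then
      if (p.word.get ⟨n, h⟩) = none ∧
          p.fn ⟨p.word.take (n + 1), List.take_prefix _ _⟩ =
            p.fn ⟨p.word.take n, List.take_prefix _ _⟩ then
        stutterWordAux p n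
      else stutterWordAux p n ++ [p.word.get ⟨n, h⟩]
    else []

/-- The (unique) stutter basis of a path `p`. -/
noncomputable def stutterBasis (p : Path A X) (σ : {σ : Word A // σ <+: p.word}) : Word A :=
  stutterWordAux p σ.1.length

/-- The stutter invariant path `♮p` relative to `p`: its domain is the image of the stutter
basis `φ` and it satisfies `♮p ∘ φ = p`. -/
noncomputable def stutter (p : Path A X) : Path A X where
  word := stutterBasis p ⟨p.word, List.prefix_refl _⟩
  fn := fun w =>
    haveI : Nonempty {σ : Word A // σ <+: p.word} := ⟨⟨[], nilPrefix _⟩⟩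
    p.fn (Function.invFun (stutterBasis p) w.1)

end Path

/-- Stutter equivalence of paths: `p ∼ q` iff `♮p = ♮q`. -/
def StutterEquiv {A X : Type*} (p q : Path A X) : Prop := p.stutter = q.stutter

instance pathSetoid (A X : Type*) : Setoid (Path A X) :=
  ⟨StutterEquiv, ⟨fun _ => rfl, Eq.symm, Eq.trans⟩⟩

/-- The set `Path_∼(X)` of paths up to stutter equivalence. -/
abbrev PathQuot (A X : Type*) := Quotient (pathSetoid A X)

/-- The quotient map `π : Path(X) → Path_∼(X)`. -/
def PathQuot.mk {A X : Type*} (p : Path A X) : PathQuot A X := Quotient.mk _ p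

/-- `Path_∼(f)[p] = [f ∘ p]`. -/
noncomputable def PathQuot.map {A X Y : Type*} (f : X → Y) (c : PathQuot A X) : PathQuot A Y :=
  PathQuot.mk (Path.map f c.out)

/-- The order on `Path_∼(X)`: `[p] ⪯ [q]` iff `♮p ⪯ ♮q`. -/
def PathQuot.le {A X : Type*} (c d : PathQuot A X) : Prop :=
  ∃ p q : Path A X, PathQuot.mk p = c ∧ PathQuot.mk q = d ∧ p.stutter.le q.stutter

/-- The set of words of the shape `τ*aτ*`. -/
def TauStarATauStar {A : Type*} (a : A) (w : Word A) : Prop :=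
  ∃ n m : ℕ, w = List.replicate n none ++ some a :: List.replicate m none

/-! ## Prefix orders, the sobrification `X∞`, Scott topology, valuations -/

section OrderTheory

variable {Z : Type*}

/-- Downward-closed subsets: the closed sets of the Alexandroff topology. -/
def IsDownClosed [Preorder Z] (C : Set Z) : Prop :=
  ∀ ⦃x⦄, x ∈ C → ∀ ⦃y⦄, y ≤ x → y ∈ C

/-- Irreducible closed subsets of the Alexandroff topology. -/
def IsIrredClosed [Preorder Z] (C : Set Z) : Prop :=
  IsDownClosed C ∧ C.Nonempty ∧
    ∀ C₁ C₂ : Set Z, IsDownClosed C₁ → IsDownClosed C₂ → C = C₁ ∪ C₂ → C = C₁ ∨ C = C₂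

/-- A set is non-sober if it is irreducible and closed (w.r.t. the Alexandroff topology) but is
not the closure (the principal ideal) of any single point. -/
def NonSober [Preorder Z] (C : Set Z) : Prop :=
  IsIrredClosed C ∧ ¬ ∃ x : Z, C = {y | y ≤ x}

/-- `X∞`: `X` together with a fresh limit point `∞_C` for every non-sober `C ⊆ X`. -/
def Extended (Z : Type*) [Preorder Z] := Z ⊕ {C : Set Z // NonSober C}

/-- The order `⪯'` on `X∞` extending `⪯` by `∞_C ⪯' ∞_C` and `x ⪯' ∞_C` for `x ∈ C`. -/
def extLE [Preorder Z] : Extended Z → Extended Z → Prop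
  | Sum.inl x, Sum.inl y => x ≤ y
  | Sum.inl x, Sum.inr C => x ∈ C.1
  | Sum.inr _, Sum.inl _ => False
  | Sum.inr C, Sum.inr D => C = D

instance [PartialOrder Z] : PartialOrder (Extended Z) where
  le := extLE
  le_refl a := by
    cases a with
    | inl x => exact le_refl x
    | inr C => exact rfl
  le_trans a b c hab hbc := by
    cases a with
    | inl x =>
      cases b with
      | inl y =>
        cases c with
        | inl z => exact le_trans hab hbc
        | inr C => exact C.2.1.1 hbc hab
      | inr C =>
        cases c with
        | inl z => exact False.elim hbc
        | inr D => exact (show C = D from hbc) ▸ hab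
    | inr C =>
      cases b with
      | inl y => exact False.elim hab
      | inr D =>
        cases c with
        | inl z => exact False.elim hbc
        | inr E => exact (show C = D from hab).trans (show D = E from hbc)
  le_antisymm a b hab hba := by
    cases a with
    | inl x =>
      cases b with
      | inl y => exact congrArg Sum.inl (le_antisymm hab hba)
      | inr C => exact False.elim hba
    | inr C =>
      cases b with
      | inl y => exact False.elim hab
      | inr D => exact congrArg Sum.inr hab

/-- Scott-open subsets: upward closed and inaccessible by directed joins. -/
def ScottOpen {W : Type*} [Preorder W] (U : Set W) : Prop :=
  (∀ ⦃x y⦄, x ∈ U → x ≤ y → y ∈ U) ∧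
  ∀ D : Set W, D.Nonempty → DirectedOn (· ≤ ·) D → ∀ s : W, IsLUB D s → s ∈ U →
    (D ∩ U).Nonempty

/-- Scott-closed subsets. -/
def ScottClosed {W : Type*} [Preorder W] (C : Set W) : Prop := ScottOpen Cᶜ

end OrderTheory

section Valuation

variable {W : Type*}

/-- A valuation on a collection `Op` of open sets: strict, monotone and modular. -/
def IsValuationOn (Op : Set (Set W)) (μ : Set W → ℝ≥0∞) : Prop :=
  μ ∅ = 0 ∧
  (∀ U ∈ Op, ∀ V ∈ Op, U ⊆ V → μ U ≤ μ V) ∧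
  (∀ U ∈ Op, ∀ V ∈ Op, μ U + μ V = μ (U ∪ V) + μ (U ∩ V))

/-- Scott continuity of a valuation: it commutes with unions of directed families of opens. -/
def IsScottContinuousOn (Op : Set (Set W)) (μ : Set W → ℝ≥0∞) : Prop :=
  ∀ 𝒟 : Set (Set W), 𝒟.Nonempty → (∀ U ∈ 𝒟, U ∈ Op) → DirectedOn (· ⊆ ·) 𝒟 →
    μ (⋃₀ 𝒟) = ⨆ U ∈ 𝒟, μ U

/-- Local finiteness: every point has a finitely valued open neighbourhood. -/
def IsLocallyFiniteOn (Op : Set (Set W)) (μ : Set W → ℝ≥0∞) : Prop :=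
  ∀ x : W, ∃ U ∈ Op, x ∈ U ∧ μ U < ⊤

/-- The open sets of the Alexandroff topology of a preorder: the upward-closed sets. -/
def UpClosedSets (W : Type*) [Preorder W] : Set (Set W) :=
  {U | ∀ ⦃x y⦄, x ∈ U → x ≤ y → y ∈ U}

/-- The Scott-open subsets of a preorder. -/
def ScottOpens (W : Type*) [Preorder W] : Set (Set W) := {U | ScottOpen U}

end Valuation

/-- The separation closure `U* = {x ∈ U | cl {x} ∩ U = {x}}` of a subset of a
topological space. -/
def sepClosure {W : Type*} [TopologicalSpace W] (U : Set W) : Set W :=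
  {x ∈ U | closure {x} ∩ U = {x}}

/-! ## Fully probabilistic transition systems -/

section Prob

variable {A X : Type*}

/-- A fully probabilistic transition system. -/
structure FPTS (A X : Type*) where
  P : X → Option A → X → ℝ≥0∞
  le_one : ∀ x a y, P x a y ≤ 1
  finite_support : ∀ x : X, {q : Option A × X | 0 < P x q.1 q.2}.Finite
  total : ∀ x : X,
    (∑' q : Option A × X, P x q.1 q.2) = 0 ∨ (∑' q : Option A × X, P x q.1 q.2) = 1

/-- `p` is an execution from `x`. -/
def IsExec (S : FPTS A X) (x : X) (p : Path A X) : Prop :=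
  p.start = x ∧
  ∀ (σ : Word A) (a : Option A) (h : σ ++ [a] <+: p.word),
    0 < S.P (p.fn ⟨σ, (Path.prefixSnoc σ a).trans h⟩) a (p.fn ⟨σ ++ [a], h⟩)

/-- The weight function `μ_P` on paths: the product of the transition probabilities along an
execution, and `0` on paths that are not executions. -/
noncomputable def pathWeight (S : FPTS A X) (p : Path A X) : ℝ≥0∞ :=
  if ∃ x : X, IsExec S x p then
    ∏ i : Fin p.word.length,
      S.P (p.fn ⟨p.word.take i.1, List.take_prefix _ _⟩)
          (p.word.get i)
          (p.fn ⟨p.word.take (i.1 + 1), List.take_prefix _ _⟩)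
  else 0

/-- `x →_L Y`: executions from `x` with trace in `L`, last state in `Y`, and no strict prefix
witnessing the same. -/
def stepSet (S : FPTS A X) (x : X) (L : Set (Word A)) (Y : Set X) : Set (Path A X) :=
  {p | IsExec S x p ∧ p.trace ∈ L ∧ p.last ∈ Y ∧
       ∀ q : Path A X, q.lt p → q.trace ∈ L → q.last ∉ Y}

/-- `x ⇒_L Y`: paths starting in `x` with trace in `L` and last state in `Y`. -/
def reachSet (x : X) (L : Set (Word A)) (Y : Set X) : Set (Path A X) :=
  {p | p.start = x ∧ p.trace ∈ L ∧ p.last ∈ Y}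

/-- The separation closure `U*` of a set of paths (w.r.t. the prefix order). -/
def sepMin (U : Set (Path A X)) : Set (Path A X) :=
  {p ∈ U | ∀ q ∈ U, q.le p → q = p}

/-- The upward-closed sets of paths: the opens of the Alexandroff topology on `Path(X)`. -/
def pathUpSets (A X : Type*) : Set (Set (Path A X)) :=
  {U | ∀ p ∈ U, ∀ q : Path A X, p.le q → q ∈ U}

end Prob

/-! ## Labelled transition systems -/

section LTS

variable {A X : Type}

/-- `p` is an execution of the labelled transition system `Tr` from `x`. -/
def IsExecLTS (Tr : X → Option A → X → Prop) (x : X) (p : Path A X) : Prop :=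
  p.start = x ∧
  ∀ (σ : Word A) (a : Option A) (h : σ ++ [a] <+: p.word),
    Tr (p.fn ⟨σ, (Path.prefixSnoc σ a).trans h⟩) a (p.fn ⟨σ ++ [a], h⟩)

/-- Branching bisimulation. -/
def IsBranchingBisim (Tr : X → Option A → X → Prop) (R : X → X → Prop) : Prop :=
  Symmetric R ∧
  ∀ (x x' y : X) (a : Option A), Tr x a x' → R x y →
    (a = none ∧ R x' y) ∨
    ∃ y' y'' : X, Relation.ReflTransGen (fun u v => Tr u none v) y y' ∧
      Tr y' a y'' ∧ R x y' ∧ R x' y''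

/-- Two states are branching bisimilar if some branching bisimulation relates them. -/
def BranchingBisimilar (Tr : X → Option A → X → Prop) (x x' : X) : Prop :=
  ∃ R : X → X → Prop, IsBranchingBisim Tr R ∧ R x x'

/-- The path-based coalgebra `α : X → P(Path_∼ X)` of a labelled transition system: the
stutter classes of executions from `x` with trace in `τ*a` (for some `a ∈ A`) or in `τ*`. -/
def ltsAlpha (Tr : X → Option A → X → Prop) (x : X) : Set (PathQuot A X) :=
  {c | ∃ p : Path A X, IsExecLTS Tr x p ∧
    ((∃ (a : A) (n : ℕ), p.word = List.replicate n none ++ [some a]) ∨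
     (∃ n : ℕ, p.word = List.replicate n (none : Option A))) ∧
    c = PathQuot.mk p}

end LTS


private theorem prefix_snoc_iff' {α} (w l : List α) (a : α) :
    w <+: l ++ [a] ↔ w <+: l ∨ w = l ++ [a] := by
  constructor
  · rintro ⟨t, ht⟩
    rcases t.eq_nil_or_concat with rfl | ⟨t', b, rfl⟩
    · right; simpa using ht
    · left
      rw [List.concat_eq_append, ← List.append_assoc] at ht
      obtain ⟨h1, -⟩ := List.append_inj' ht rfl
      exact ⟨t', h1⟩
  · rintro (h | rfl)
    · exact h.trans ⟨[a], rfl⟩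
    · exact List.prefix_refl _

theorem stutterBasisAux' {A X : Type*} (p : Path A X)
    (φ : {σ : Word A // σ <+: p.word} → Word A) (hφ : Path.IsStutterBasis p φ) :
    ∀ (σ : Word A) (h : σ <+: p.word),
      (∀ (ρ : Word A) (hρ : ρ <+: σ), φ ⟨ρ, hρ.trans h⟩ <+: φ ⟨σ, h⟩) ∧
      (∀ w, w <+: φ ⟨σ, h⟩ → ∃ (ρ : Word A) (hρ : ρ <+: σ), φ ⟨ρ, hρ.trans h⟩ = w) := by
  intro σ
  induction σ using List.reverseRecOn with
  | nil =>
    intro h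
    have h0 : φ ⟨[], h⟩ = [] := hφ.1
    constructor
    · intro ρ hρ
      have hρ0 : ρ = [] := List.prefix_nil.mp hρ
      subst hρ0; exact List.prefix_refl _
    · intro w hw
      rw [h0] at hw
      have hw0 : w = [] := List.prefix_nil.mp hw
      exact ⟨[], List.prefix_refl _, h0.trans hw0.symm⟩
  | append_singleton σ' a ih =>
    intro h
    have h' : σ' <+: p.word := (Path.prefixSnoc σ' a).trans h
    obtain ⟨ih1, ih2⟩ := ih h'
    have key : φ ⟨σ' ++ [a], h⟩ = φ ⟨σ', h'⟩ ∨ φ ⟨σ' ++ [a], h⟩ = φ ⟨σ', h'⟩ ++ [a] := by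
      match a with
      | none =>
        by_cases he : p.fn ⟨σ' ++ [none], h⟩ =
            p.fn ⟨σ', (Path.prefixSnoc σ' none).trans h⟩
        · left; exact (hφ.2.1 σ' h).1 he
        · right; exact (hφ.2.1 σ' h).2 he
      | some b =>
        right; exact hφ.2.2 σ' b h
    constructor
    · intro ρ hρ
      rcases (prefix_snoc_iff' ρ σ' a).mp hρ with hρ' | rfl
      · have hpre : φ ⟨ρ, hρ.trans h⟩ <+: φ ⟨σ', h'⟩ := ih1 ρ hρ'
        rcases key with k | k
        · rw [k]; exact hpre
        · rw [k]; exact hpre.trans ⟨[a], rfl⟩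
      · exact List.prefix_refl _
    · intro w hw
      rcases key with k | k
      · rw [k] at hw
        obtain ⟨ρ, hρ, he⟩ := ih2 w hw
        exact ⟨ρ, hρ.trans (Path.prefixSnoc σ' a), he⟩
      · rw [k] at hw
        rcases (prefix_snoc_iff' w _ a).mp hw with hw' | rfl
        · obtain ⟨ρ, hρ, he⟩ := ih2 w hw'
          exact ⟨ρ, hρ.trans (Path.prefixSnoc σ' a), he⟩
        · exact ⟨σ' ++ [a], List.prefix_refl _, k⟩

theorem stmt2 {A X : Type*} (p : Path A X)
    (φ : {σ : Word A // σ <+: p.word} → Word A) (hφ : Path.IsStutterBasis p φ) :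
    Set.range φ = {w : Word A | w <+: φ ⟨p.word, List.prefix_refl _⟩} := by
  ext w
  simp only [Set.mem_range, Set.mem_setOf_eq]
  constructor
  · rintro ⟨⟨σ, hσ⟩, rfl⟩
    exact (stutterBasisAux' p φ hφ p.word (List.prefix_refl _)).1 σ hσ
  · intro hw
    obtain ⟨ρ, hρ, he⟩ := (stutterBasisAux' p φ hφ p.word (List.prefix_refl _)).2 w hw
    exact ⟨⟨ρ, hρ.trans (List.prefix_refl _)⟩, he⟩

end PaperBB
end

section
/- For any path p on a set X and any function f : X → Y, the paths f ∘ ♮p and f ∘ p on Y are stutter equivalent: f ∘ ♮p ∼ f ∘ p. -/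
open scoped Classical ENNReal

namespace PaperBB

/-!
Deleting from a path some `τ`-steps at which it stutters does not change its stutter invariant
path: the recursion defining the stutter basis makes the same choices on the kept steps and
ignores the deleted ones. `♮p` arises from `p` by such deletions, and they remain deletions of
stuttering steps after composing both paths with `f`; hence `f ∘ ♮p ∼ f ∘ p`.
-/

namespace Path

variable {A X Y : Type*}

/-- `p` at the prefix of length `n` of its trace; the last state of `p` once `n` exceeds the
length. -/
def stateAt (p : Path A X) (n : ℕ) : X := p.fn ⟨p.word.take n, List.take_prefix _ _⟩

theorem fn_eq_stateAt (p : Path A X) {σ : Word A} (h : σ <+: p.word) :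
    p.fn ⟨σ, h⟩ = p.stateAt σ.length := by
  unfold stateAt
  congr 2
  exact List.prefix_iff_eq_take.mp h

theorem ext_stateAt {p q : Path A X} (hword : p.word = q.word)
    (hstate : ∀ n ≤ p.word.length, p.stateAt n = q.stateAt n) : p = q := by
  obtain ⟨w, φ⟩ := p
  obtain ⟨w', ψ⟩ := q
  obtain rfl : w = w' := hword
  congr
  funext ⟨σ, hσ⟩
  exact (fn_eq_stateAt ⟨w, φ⟩ hσ).trans
    ((hstate _ hσ.length_le).trans (fn_eq_stateAt ⟨w, ψ⟩ hσ).symm)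

theorem stutterWordAux_succ (p : Path A X) {k : ℕ} (hk : k < p.word.length) :
    p.stutterWordAux (k + 1) =
      if p.word[k] = none ∧ p.stateAt (k + 1) = p.stateAt k then p.stutterWordAux k
      else p.stutterWordAux k ++ [p.word[k]] := by
  rw [stutterWordAux, dif_pos hk]
  rfl

theorem stutterWordAux_succ_eq_or (p : Path A X) {k : ℕ} (hk : k < p.word.length) :
    p.stutterWordAux (k + 1) = p.stutterWordAux k ∨
      p.stutterWordAux (k + 1) = p.stutterWordAux k ++ [p.word[k]] := by
  rw [stutterWordAux_succ p hk]
  split_ifs <;> simp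

theorem stutterWordAux_prefix_of_le (p : Path A X) {m n : ℕ} (hmn : m ≤ n)
    (hn : n ≤ p.word.length) : p.stutterWordAux m <+: p.stutterWordAux n := by
  induction n, hmn using Nat.le_induction with
  | base => exact List.prefix_refl _
  | succ k _ ih =>
    have hk : k < p.word.length := hn
    refine (ih hk.le).trans ?_
    rcases stutterWordAux_succ_eq_or p hk with h | h
    · rw [h]
    · rw [h]; exact List.prefix_append _ _

theorem stateAt_succ_of_stutterWordAux_succ_eq (p : Path A X) {k : ℕ}
    (hk : k < p.word.length) (h : p.stutterWordAux (k + 1) = p.stutterWordAux k) :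
    p.stateAt (k + 1) = p.stateAt k := by
  rw [stutterWordAux_succ p hk] at h
  split_ifs at h with hstep
  · exact hstep.2
  · simp at h

theorem stateAt_eq_of_stutterWordAux_eq (p : Path A X) {m n : ℕ} (hm : m ≤ p.word.length)
    (hn : n ≤ p.word.length) (h : p.stutterWordAux m = p.stutterWordAux n) :
    p.stateAt m = p.stateAt n := by
  wlog hmn : m ≤ n generalizing m n
  · exact (this hn hm h.symm (le_of_not_ge hmn)).symm
  induction n, hmn using Nat.le_induction with
  | base => rfl
  | succ k hmk ih =>
    have hk : k < p.word.length := hn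
    have hmk' : p.stutterWordAux m = p.stutterWordAux k := by
      refine (stutterWordAux_prefix_of_le p hmk hk.le).eq_of_length (le_antisymm ?_ ?_)
      · exact (stutterWordAux_prefix_of_le p hmk hk.le).length_le
      · rw [h]; exact (stutterWordAux_prefix_of_le p k.le_succ hn).length_le
    rw [ih hk.le hmk', stateAt_succ_of_stutterWordAux_succ_eq p hk (h.symm.trans hmk')]

theorem exists_length_stutterWordAux_eq (p : Path A X) {n : ℕ} (hn : n ≤ p.word.length)
    {j : ℕ} (hj : j ≤ (p.stutterWordAux n).length) :
    ∃ m ≤ n, (p.stutterWordAux m).length = j := by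
  induction n generalizing j with
  | zero => exact ⟨0, le_rfl, by simp only [stutterWordAux, List.length_nil] at hj ⊢; omega⟩
  | succ k ih =>
    have hk : k < p.word.length := hn
    by_cases hjk : j ≤ (p.stutterWordAux k).length
    · obtain ⟨m, hm, hmj⟩ := ih hk.le hjk
      exact ⟨m, hm.trans k.le_succ, hmj⟩
    · refine ⟨k + 1, le_rfl, le_antisymm ?_ hj⟩
      rcases stutterWordAux_succ_eq_or p hk with h | h <;>
        simp only [h, List.length_append, List.length_singleton] at hj ⊢ <;> omega

theorem stutter_word (p : Path A X) : p.stutter.word = p.stutterWordAux p.word.length := rfl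

/-- `♮p ∘ φ = p`, read at the prefixes of `p`. -/
theorem stutter_stateAt_length_stutterWordAux (p : Path A X) {n : ℕ} (hn : n ≤ p.word.length) :
    p.stutter.stateAt (p.stutterWordAux n).length = p.stateAt n := by
  have : Nonempty {σ : Word A // σ <+: p.word} := ⟨⟨[], nilPrefix _⟩⟩
  have hpre : p.stutterWordAux n <+: p.stutter.word := stutterWordAux_prefix_of_le p hn le_rfl
  have hex : ∃ σ, p.stutterBasis σ = p.stutterWordAux n :=
    ⟨⟨p.word.take n, List.take_prefix _ _⟩, by simp [stutterBasis, Nat.min_eq_left hn]⟩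
  rw [← fn_eq_stateAt _ hpre]
  show p.fn (Function.invFun p.stutterBasis (p.stutterWordAux n)) = _
  have hbasis := Function.invFun_eq hex
  generalize Function.invFun p.stutterBasis (p.stutterWordAux n) = σ at hbasis ⊢
  obtain ⟨σ, hσ⟩ := σ
  rw [fn_eq_stateAt]
  exact stateAt_eq_of_stutterWordAux_eq p hσ.length_le hn hbasis

/-- `g` reindexes `p` onto `q`: `q` is `p` with some of its stuttering `τ`-steps deleted, the
`k`-th step of `p` being the `g k`-th step of `q` when it is kept. -/
structure IsStutterReduction (p q : Path A X) (g : ℕ → ℕ) : Prop where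
  zero : g 0 = 0
  length : g p.word.length = q.word.length
  stateAt : ∀ n ≤ p.word.length, p.stateAt n = q.stateAt (g n)
  step : ∀ k < p.word.length,
    (p.word[k]? = some none ∧ g (k + 1) = g k) ∨
      (q.word[g k]? = p.word[k]? ∧ g (k + 1) = g k + 1)

namespace IsStutterReduction

variable {p q : Path A X} {g : ℕ → ℕ}

theorem map (h : IsStutterReduction p q g) (f : X → Y) :
    IsStutterReduction (p.map f) (q.map f) g :=
  ⟨h.zero, h.length, fun n hn => congrArg f (h.stateAt n hn), h.step⟩

theorem le_length (h : IsStutterReduction p q g) {n : ℕ} (hn : n ≤ p.word.length) :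
    g n ≤ q.word.length := by
  rw [← h.length]
  induction hn using Nat.decreasingInduction with
  | self => exact le_rfl
  | of_succ k hk ih =>
    rcases h.step k hk with ⟨-, hg⟩ | ⟨-, hg⟩ <;> omega

theorem stutterWordAux_eq (h : IsStutterReduction p q g) {n : ℕ} (hn : n ≤ p.word.length) :
    p.stutterWordAux n = q.stutterWordAux (g n) := by
  induction n with
  | zero => rw [h.zero]; rfl
  | succ k ih =>
    have hk : k < p.word.length := hn
    rcases h.step k hk with ⟨hτ, hg⟩ | ⟨hletter, hg⟩
    · have hstate : p.stateAt (k + 1) = p.stateAt k := by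
        rw [h.stateAt _ hn, h.stateAt _ hk.le, hg]
      have hτ' : p.word[k] = none := by simpa [hk] using hτ
      rw [stutterWordAux_succ p hk, if_pos ⟨hτ', hstate⟩, hg, ih hk.le]
    · have hgk : g k < q.word.length := by
        by_contra hge
        simp [List.getElem?_eq_none (not_lt.mp hge), hk] at hletter
      have hw : q.word[g k] = p.word[k] := by simpa [hk, hgk] using hletter
      rw [stutterWordAux_succ p hk, hg, stutterWordAux_succ q hgk, ← ih hk.le, hw,
        ← hg, ← h.stateAt _ hn, ← h.stateAt _ hk.le]

theorem stutter_eq (h : IsStutterReduction p q g) : p.stutter = q.stutter := by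
  have hword : p.stutter.word = q.stutter.word := by
    rw [stutter_word, stutter_word, h.stutterWordAux_eq le_rfl, h.length]
  refine ext_stateAt hword fun j hj => ?_
  obtain ⟨m, hm, rfl⟩ := exists_length_stutterWordAux_eq p le_rfl hj
  have hm' : m ≤ p.word.length := hm
  rw [stutter_stateAt_length_stutterWordAux p hm', h.stateAt m hm', h.stutterWordAux_eq hm',
    stutter_stateAt_length_stutterWordAux q (h.le_length hm')]

end IsStutterReduction

theorem isStutterReduction_stutter (p : Path A X) :
    IsStutterReduction p p.stutter fun n => (p.stutterWordAux n).length where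
  zero := rfl
  length := rfl
  stateAt n hn := (stutter_stateAt_length_stutterWordAux p hn).symm
  step k hk := by
    rw [stutterWordAux_succ p hk]
    split_ifs with hstep
    · exact Or.inl ⟨by simp [hk, hstep.1], rfl⟩
    · refine Or.inr ⟨?_, by simp⟩
      obtain ⟨t, ht⟩ := stutterWordAux_prefix_of_le p hk le_rfl
      rw [stutterWordAux_succ p hk, if_neg hstep] at ht
      rw [stutter_word, ← ht]
      simp [hk]

end Path

theorem stmt3 {A X Y : Type*} (p : Path A X) (f : X → Y) :
    StutterEquiv (p.stutter.map f) (p.map f) :=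
  (((Path.isStutterReduction_stutter p).map f).stutter_eq).symm

end PaperBB
end

section
/- Let X be a set and p₁, p₂ paths on X. If ♮p₁ ⪯ ♮p₂ then there exists a path p on X with p ∼ p₁ and p ⪯ p₂. -/
open scoped Classical ENNReal

namespace PaperBB

/-! ## Auxiliary lemmas for Statement 5 -/

namespace Path

variable {A X : Type*} in
/-- Restriction of a path to the prefix of length `n`. -/
def pre (q : Path A X) (n : ℕ) : Path A X :=
  ⟨q.word.take n, fun σ => q.fn ⟨σ.1, σ.2.trans (List.take_prefix _ _)⟩⟩

variable {A X : Type*}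

lemma pre_le (q : Path A X) (n : ℕ) : (q.pre n).le q :=
  ⟨List.take_prefix _ _, fun _ _ => rfl⟩

lemma aux_succ_prefix (p : Path A X) (k : ℕ) (hk : k < p.word.length) :
    stutterWordAux p k <+: stutterWordAux p (k + 1) := by
  rw [stutterWordAux, dif_pos hk]
  split_ifs
  · exact List.prefix_refl _
  · exact prefixSnoc _ _

lemma aux_prefix_of_le (p : Path A X) {j k : ℕ} (hjk : j ≤ k) (hk : k ≤ p.word.length) :
    stutterWordAux p j <+: stutterWordAux p k := by
  induction k with
  | zero =>
      have : j = 0 := by omega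
      subst this; exact List.prefix_refl _
  | succ k ih =>
      rcases Nat.eq_or_lt_of_le hjk with hc | hc
      · subst hc; exact List.prefix_refl _
      · exact (ih (by omega) (by omega)).trans (aux_succ_prefix p k (by omega))

lemma fn_eq_of_aux_eq (p : Path A X) {j k : ℕ} (hjk : j ≤ k) (hk : k ≤ p.word.length)
    (he : stutterWordAux p j = stutterWordAux p k) :
    p.fn ⟨p.word.take j, List.take_prefix _ _⟩ = p.fn ⟨p.word.take k, List.take_prefix _ _⟩ := by
  induction k with
  | zero =>
      have : j = 0 := by omega
      subst this; rfl
  | succ k ih =>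
      rcases Nat.eq_or_lt_of_le hjk with hc | hc
      · subst hc; rfl
      · have hjk' : j ≤ k := by omega
        have hk' : k < p.word.length := by omega
        rw [stutterWordAux, dif_pos hk'] at he
        split_ifs at he with hcond
        · exact (ih hjk' (by omega) he).trans hcond.2.symm
        · exfalso
          have h1 := (aux_prefix_of_le p hjk' (by omega)).length_le
          rw [he] at h1
          simp at h1

lemma exists_aux_eq (p : Path A X) {m : ℕ} (hm : m ≤ p.word.length) {w : Word A}
    (hw : w <+: stutterWordAux p m) : ∃ k, k ≤ m ∧ stutterWordAux p k = w := by
  induction m with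
  | zero => exact ⟨0, le_refl 0, (List.prefix_nil.mp hw).symm⟩
  | succ m ih =>
      have hm' : m < p.word.length := by omega
      rw [stutterWordAux, dif_pos hm'] at hw
      split_ifs at hw with hcond
      · obtain ⟨k, hk, he⟩ := ih (by omega) hw
        exact ⟨k, by omega, he⟩
      · rcases List.prefix_concat_iff.mp hw with hc | hc
        · refine ⟨m + 1, le_refl _, ?_⟩
          rw [stutterWordAux, dif_pos hm', if_neg hcond, hc]
        · obtain ⟨k, hk, he⟩ := ih (by omega) hc
          exact ⟨k, by omega, he⟩

lemma fn_invFun (p : Path A X) {k : ℕ} (hk : k ≤ p.word.length) :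
    haveI : Nonempty {σ : Word A // σ <+: p.word} := ⟨⟨[], nilPrefix _⟩⟩
    p.fn (Function.invFun (stutterBasis p) (stutterWordAux p k)) =
      p.fn ⟨p.word.take k, List.take_prefix _ _⟩ := by
  haveI : Nonempty {σ : Word A // σ <+: p.word} := ⟨⟨[], nilPrefix _⟩⟩
  have hex : ∃ σ : {σ : Word A // σ <+: p.word}, stutterBasis p σ = stutterWordAux p k := by
    refine ⟨⟨p.word.take k, List.take_prefix _ _⟩, ?_⟩
    show stutterWordAux p (p.word.take k).length = _
    rw [List.length_take, min_eq_left hk]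
  have h1 : stutterBasis p (Function.invFun (stutterBasis p) (stutterWordAux p k)) =
      stutterWordAux p k := Function.invFun_eq hex
  set σ := Function.invFun (stutterBasis p) (stutterWordAux p k) with hσ
  have h2 : σ.1 = p.word.take σ.1.length := List.prefix_iff_eq_take.mp σ.2
  have h3 : σ.1.length ≤ p.word.length := σ.2.length_le
  have h4 : p.fn σ = p.fn ⟨p.word.take σ.1.length, List.take_prefix _ _⟩ := by
    congr 1
    exact Subtype.ext h2
  rw [h4]
  have h1' : stutterWordAux p σ.1.length = stutterWordAux p k := h1
  rcases le_total σ.1.length k with hle | hle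
  · exact fn_eq_of_aux_eq p hle hk h1'
  · exact (fn_eq_of_aux_eq p hle h3 h1'.symm).symm

lemma pre_aux (q : Path A X) {n : ℕ} (hn : n ≤ q.word.length) {k : ℕ} (hk : k ≤ n) :
    stutterWordAux (q.pre n) k = stutterWordAux q k := by
  induction k with
  | zero => rfl
  | succ k ih =>
      have h1 : (q.pre n).word.length = n := by
        show (q.word.take n).length = n
        rw [List.length_take, min_eq_left hn]
      have hk' : k < (q.pre n).word.length := by omega
      have hk2 : k < q.word.length := by omega
      rw [stutterWordAux, dif_pos hk', stutterWordAux, dif_pos hk2]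
      have hget : (q.pre n).word.get ⟨k, hk'⟩ = q.word.get ⟨k, hk2⟩ := by
        show (q.word.take n).get ⟨k, hk'⟩ = _
        simp [List.getElem_take]
      have hfn : ∀ m, m ≤ n → (q.pre n).fn ⟨(q.pre n).word.take m, List.take_prefix _ _⟩ =
          q.fn ⟨q.word.take m, List.take_prefix _ _⟩ := by
        intro m hm
        show q.fn _ = q.fn _
        congr 1
        refine Subtype.ext ?_
        show (q.word.take n).take m = q.word.take m
        rw [List.take_take, min_eq_left hm]
      rw [hget, hfn (k + 1) hk, hfn k (by omega), ih (by omega)]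

lemma ext' {p q : Path A X} (hw : p.word = q.word)
    (hf : ∀ (σ : Word A) (h1 : σ <+: p.word) (h2 : σ <+: q.word),
      p.fn ⟨σ, h1⟩ = q.fn ⟨σ, h2⟩) : p = q := by
  cases p with | mk w f =>
  cases q with | mk w' f' =>
  cases hw
  simp only [mk.injEq, heq_eq_eq, true_and]
  funext σ
  obtain ⟨s, hs⟩ := σ
  exact hf s hs hs

end Path
theorem stmt5 {A X : Type*} (p₁ p₂ : Path A X) (h : p₁.stutter.le p₂.stutter) :
    ∃ p : Path A X, StutterEquiv p p₁ ∧ p.le p₂ := by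
  haveI i1 : Nonempty {σ : Word A // σ <+: p₂.word} := ⟨⟨[], Path.nilPrefix _⟩⟩
  obtain ⟨hw, hfn⟩ := h
  have hw2 : p₁.stutter.word <+: Path.stutterWordAux p₂ p₂.word.length := hw
  obtain ⟨n, hn, hne⟩ := Path.exists_aux_eq p₂ (le_refl _) hw2
  refine ⟨p₂.pre n, ?_, Path.pre_le p₂ n⟩
  set p := p₂.pre n with hp
  haveI i2 : Nonempty {σ : Word A // σ <+: p.word} := ⟨⟨[], Path.nilPrefix _⟩⟩
  have hplen : p.word.length = n := by
    show (p₂.word.take n).length = n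
    rw [List.length_take, min_eq_left hn]
  have hpaux : ∀ k, k ≤ n → Path.stutterWordAux p k = Path.stutterWordAux p₂ k :=
    fun k hk => Path.pre_aux p₂ hn hk
  have hword : p.stutter.word = p₁.stutter.word := by
    show Path.stutterWordAux p p.word.length = _
    rw [hplen, hpaux n (le_refl n), hne]
  refine Path.ext' hword ?_
  intro w h1 h2
  have h1' : w <+: Path.stutterWordAux p p.word.length := h1
  obtain ⟨k, hk, hke⟩ := Path.exists_aux_eq p (le_refl _) h1'
  have hkn : k ≤ n := hplen ▸ hk
  have hk2 : k ≤ p₂.word.length := le_trans hkn hn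
  have hw2k : Path.stutterWordAux p₂ k = w := (hpaux k hkn).symm.trans hke
  -- LHS
  have lhs : p.stutter.fn ⟨w, h1⟩ = p.fn ⟨p.word.take k, List.take_prefix _ _⟩ := by
    show p.fn (Function.invFun (Path.stutterBasis p) w) = _
    rw [← hke]
    exact Path.fn_invFun p hk
  -- convert p.fn take k to p₂.fn take k
  have lhs2 : p.fn ⟨p.word.take k, List.take_prefix _ _⟩ =
      p₂.fn ⟨p₂.word.take k, List.take_prefix _ _⟩ := by
    show p₂.fn _ = p₂.fn _
    congr 1
    refine Subtype.ext ?_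
    show (p₂.word.take n).take k = p₂.word.take k
    rw [List.take_take, min_eq_left hkn]
  -- RHS
  have rhs : p₁.stutter.fn ⟨w, h2⟩ = p₂.fn ⟨p₂.word.take k, List.take_prefix _ _⟩ := by
    have hrel := hfn w h2
    rw [← hrel]
    show p₂.fn (Function.invFun (Path.stutterBasis p₂) w) = _
    rw [← hw2k]
    exact Path.fn_invFun p₂ hk2
  rw [lhs, lhs2, rhs]

end PaperBB
end

section
/- On the quotient Path_∼(X) of Path(X) by stutter equivalence, the relation defined by [p] ⪯ [q] iff ♮p ⪯ ♮q is well defined (independent of the chosen representatives) and is a partial order; moreover it is a prefix order, i.e., every principal ideal {[q] | [q] ⪯ [p]} is totally ordered. -/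
open scoped Classical ENNReal

namespace PaperBB

section Aux

variable {A X : Type*}

theorem Path.le_refl' (p : Path A X) : p.le p :=
  ⟨List.prefix_refl _, fun _ _ => rfl⟩

theorem Path.le_trans' {p q r : Path A X} (h1 : p.le q) (h2 : q.le r) : p.le r := by
  obtain ⟨hw1, hf1⟩ := h1
  obtain ⟨hw2, hf2⟩ := h2
  exact ⟨hw1.trans hw2, fun σ hσ => (hf2 σ (hσ.trans hw1)).trans (hf1 σ hσ)⟩

theorem Path.le_antisymm' {p q : Path A X} (h1 : p.le q) (h2 : q.le p) : p = q := by
  obtain ⟨hw1, hf1⟩ := h1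
  obtain ⟨hw2, hf2⟩ := h2
  cases p with
  | mk w f =>
    cases q with
    | mk w' f' =>
      have hw : w = w' := hw1.eq_of_length_le hw2.length_le
      subst hw
      simp only [mk.injEq, heq_eq_eq, true_and]
      funext σ
      cases σ with
      | mk s hs => exact (hf1 s hs).symm

theorem Path.le_total_of_le {p q r : Path A X} (h1 : p.le r) (h2 : q.le r) :
    p.le q ∨ q.le p := by
  obtain ⟨hw1, hf1⟩ := h1
  obtain ⟨hw2, hf2⟩ := h2
  rcases List.prefix_or_prefix_of_prefix hw1 hw2 with h | h
  · exact Or.inl ⟨h, fun σ hσ =>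
      ((hf2 σ (hσ.trans h)).symm.trans (hf1 σ hσ))⟩
  · exact Or.inr ⟨h, fun σ hσ =>
      ((hf1 σ (hσ.trans h)).symm.trans (hf2 σ hσ))⟩

theorem PathQuot.mk_eq_iff {p q : Path A X} :
    PathQuot.mk p = PathQuot.mk q ↔ p.stutter = q.stutter :=
  ⟨fun h => Quotient.exact h, fun h => Quotient.sound h⟩

theorem PathQuot.le_iff {p q : Path A X} :
    PathQuot.le (PathQuot.mk p) (PathQuot.mk q) ↔ p.stutter.le q.stutter := by
  constructor
  · rintro ⟨p', q', hp, hq, hle⟩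
    have hp' : p'.stutter = p.stutter := Quotient.exact hp
    have hq' : q'.stutter = q.stutter := Quotient.exact hq
    rwa [hp', hq'] at hle
  · intro h
    exact ⟨p, q, rfl, rfl, h⟩

end Aux

theorem stmt7 {A X : Type*} :
    (∀ p q : Path A X,
      PathQuot.le (PathQuot.mk p) (PathQuot.mk q) ↔ p.stutter.le q.stutter) ∧
    (∀ c : PathQuot A X, PathQuot.le c c) ∧
    (∀ c d : PathQuot A X, PathQuot.le c d → PathQuot.le d c → c = d) ∧
    (∀ c d e : PathQuot A X, PathQuot.le c d → PathQuot.le d e → PathQuot.le c e) ∧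
    (∀ c d e : PathQuot A X, PathQuot.le d c → PathQuot.le e c →
      PathQuot.le d e ∨ PathQuot.le e d) := by
  refine ⟨fun p q => PathQuot.le_iff, ?_, ?_, ?_, ?_⟩
  · intro c
    exact ⟨c.out, c.out, c.out_eq, c.out_eq, Path.le_refl' _⟩
  · rintro c d ⟨p, q, rfl, rfl, h1⟩ h2
    rw [PathQuot.le_iff] at h2
    exact PathQuot.mk_eq_iff.mpr (Path.le_antisymm' h1 h2)
  · rintro c d e ⟨p, q, rfl, rfl, h1⟩ ⟨q', r, hq', rfl, h2⟩
    have hqq : q.stutter = q'.stutter := (Quotient.exact hq').symm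
    rw [hqq] at h1
    exact ⟨p, r, rfl, rfl, Path.le_trans' h1 h2⟩
  · rintro c d e ⟨p, q, rfl, rfl, h1⟩ ⟨p', q', hp', hq', h2⟩
    have hqq : q'.stutter = q.stutter := Quotient.exact hq'
    rw [hqq] at h2
    rcases Path.le_total_of_le h1 h2 with h | h
    · exact Or.inl ⟨p, p', rfl, hp', h⟩
    · exact Or.inr ⟨p', p, hp', rfl, h⟩

end PaperBB
end

section
/- Let (X, ⪯) be a prefix order. Then the set X∞, obtained from X by adjoining a new point ∞_C for every non-sober subset C of X, ordered by the relation ⪯' that extends ⪯ by setting ∞_C ⪯' ∞_C for every such C and x ⪯' ∞_C for every x ∈ C, is again a prefix order. -/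
open scoped Classical ENNReal

namespace PaperBB

theorem stmt11 {Z : Type*} [PartialOrder Z]
    (hpre : ∀ x y z : Z, y ≤ x → z ≤ x → y ≤ z ∨ z ≤ y) :
    (∀ a : Extended Z, extLE a a) ∧
    (∀ a b : Extended Z, extLE a b → extLE b a → a = b) ∧
    (∀ a b c : Extended Z, extLE a b → extLE b c → extLE a c) ∧
    (∀ a b c : Extended Z, extLE b a → extLE c a → extLE b c ∨ extLE c b) := by
  have hdir : ∀ (C : Set Z), IsIrredClosed C → ∀ y ∈ C, ∀ z ∈ C,
      ∃ w ∈ C, y ≤ w ∧ z ≤ w := by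
    intro C hC y hy z hz
    by_contra hno
    push_neg at hno
    set C₁ : Set Z := {w ∈ C | ¬ y ≤ w} with hC₁
    set C₂ : Set Z := {w ∈ C | ¬ z ≤ w} with hC₂
    have h₁ : IsDownClosed C₁ := by
      intro w hw v hv
      exact ⟨hC.1 hw.1 hv, fun h => hw.2 (h.trans hv)⟩
    have h₂ : IsDownClosed C₂ := by
      intro w hw v hv
      exact ⟨hC.1 hw.1 hv, fun h => hw.2 (h.trans hv)⟩
    have hunion : C = C₁ ∪ C₂ := by
      ext w
      constructor
      · intro hw
        by_cases hyw : y ≤ w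
        · exact Or.inr ⟨hw, fun hzw => (hno w hw hyw hzw)⟩
        · exact Or.inl ⟨hw, hyw⟩
      · rintro (hw | hw) <;> exact hw.1
    rcases hC.2.2 C₁ C₂ h₁ h₂ hunion with h | h
    · exact (h ▸ hy : y ∈ C₁).2 le_rfl
    · exact (h ▸ hz : z ∈ C₂).2 le_rfl
  refine ⟨?_, ?_, ?_, ?_⟩
  · intro a
    cases a with
    | inl x => exact le_refl x
    | inr C => exact rfl
  · intro a b hab hba
    cases a with
    | inl x =>
      cases b with
      | inl y => exact congrArg Sum.inl (le_antisymm hab hba)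
      | inr C => exact False.elim hba
    | inr C =>
      cases b with
      | inl y => exact False.elim hab
      | inr D => exact congrArg Sum.inr hab
  · intro a b c hab hbc
    cases a with
    | inl x =>
      cases b with
      | inl y =>
        cases c with
        | inl z => exact le_trans hab hbc
        | inr C => exact C.2.1.1 hbc hab
      | inr C =>
        cases c with
        | inl z => exact False.elim hbc
        | inr D => exact (show C = D from hbc) ▸ hab
    | inr C =>
      cases b with
      | inl y => exact False.elim hab
      | inr D =>
        cases c with
        | inl z => exact False.elim hbc
        | inr E => exact (show C = D from hab).trans (show D = E from hbc)
  · intro a b c hba hca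
    cases a with
    | inl x =>
      cases b with
      | inl y =>
        cases c with
        | inl z => exact hpre x y z hba hca
        | inr C => exact False.elim hca
      | inr C => exact False.elim hba
    | inr C =>
      cases b with
      | inl y =>
        cases c with
        | inl z =>
          obtain ⟨w, _, hyw, hzw⟩ := hdir C.1 C.2.1 y hba z hca
          exact hpre w y z hyw hzw
        | inr D =>
          left
          show y ∈ D.1
          rw [show D = C from hca]
          exact hba
      | inr D =>
        cases c with
        | inl z =>
          right
          show z ∈ D.1
          rw [show D = C from hba]
          exact hca
        | inr E =>
          left
          exact (show D = C from hba).trans (show E = C from hca).symm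

end PaperBB
end

section
/- Let (X, ⪯) be a simple prefix order. Then X∞ equipped with the Scott topology, whose open sets are the upward-closed subsets U ⊆ X∞ that are inaccessible by directed joins (for every directed D ⊆ X∞ whose supremum exists and lies in U, D ∩ U ≠ ∅), is a sober space: every irreducible closed set is the closure of a unique point. -/
open scoped Classical ENNReal

namespace PaperBB

/-!
In the Scott topology of `X∞` the upper set `↑x` of a point `x ∈ X` is open: a directed set
whose supremum lies above `x` either has its supremum in `X`, so is finite and contains that
supremum, or it approximates a limit point `∞_B` with `x ∈ B`, and then it climbs above `x`
because `B` is a chain. So in an irreducible closed `C` any two points of `X` have a common upper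
bound in `C`, and as `X∞` is again a prefix order, `B = C ∩ X` is a chain. Either `B` has a
greatest element `m` and `C = ↓m`, or `B` is non-sober, its supremum `∞_B` lies in `C`, and
`C = ↓∞_B`.
-/

open Set Topology

def IsPrefixOrder (Z : Type*) [Preorder Z] : Prop :=
  ∀ x y z : Z, y ≤ x → z ≤ x → y ≤ z ∨ z ≤ y

section General

variable {W : Type*}

theorem exists_isGreatest_of_directedOn_of_finite [Preorder W] {s : Set W}
    (hd : DirectedOn (· ≤ ·) s) (hfin : s.Finite) (hne : s.Nonempty) : ∃ m, IsGreatest s m := by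
  obtain ⟨m, hm⟩ := hfin.exists_maximal hne
  exact ⟨m, hm.prop, hd.is_top_of_is_max hm.prop fun a ha hma => hm.le_of_ge ha hma⟩

theorem mem_of_isLUB_of_directedOn_of_finite [PartialOrder W] {D : Set W} {s : W}
    (hs : IsLUB D s) (hd : DirectedOn (· ≤ ·) D) (hfin : D.Finite) (hne : D.Nonempty) : s ∈ D := by
  obtain ⟨m, hm⟩ := exists_isGreatest_of_directedOn_of_finite hd hfin hne
  exact hm.isLUB.unique hs ▸ hm.1

theorem scottClosed_iff_isClosed [Preorder W] [TopologicalSpace W] [IsScott W univ]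
    {C : Set W} : ScottClosed C ↔ IsClosed C := by
  rw [IsScott.isClosed_iff_isLowerSet_and_dirSupClosed, ← isUpperSet_compl, ← dirSupInacc_compl]
  exact ⟨fun h => ⟨fun _ _ hab ha => h.1 ha hab, fun _ hne hd _ hs ha => h.2 _ hne hd _ hs ha⟩,
    fun h => ⟨fun _ _ ha hab => h.1 hab ha, fun _ hne hd _ hs ha => h.2 hne hd hs ha⟩⟩

theorem isIrreducible_of_forall_eq_union [TopologicalSpace W] {C : Set W} (hC : IsClosed C)
    (hne : C.Nonempty) (hirr : ∀ C₁ C₂ : Set W, IsClosed C₁ → IsClosed C₂ →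
      C = C₁ ∪ C₂ → C = C₁ ∨ C = C₂) : IsIrreducible C := by
  refine ⟨hne, isPreirreducible_iff_isClosed_union_isClosed.2 fun z₁ z₂ h₁ h₂ hsub => ?_⟩
  have hcover : C = C ∩ z₁ ∪ C ∩ z₂ := by rw [← inter_union_distrib_left, inter_eq_left.2 hsub]
  exact (hirr _ _ (hC.inter h₁) (hC.inter h₂) hcover).imp
    (fun h => inter_eq_left.1 h.symm) (fun h => inter_eq_left.1 h.symm)

theorem isIrredClosed_of_isChain [Preorder W] {B : Set W} (hB : IsDownClosed B)
    (hne : B.Nonempty) (hc : IsChain (· ≤ ·) B) : IsIrredClosed B := by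
  refine ⟨hB, hne, fun C₁ C₂ h₁ h₂ hcover => ?_⟩
  by_contra! hne₁₂
  obtain ⟨b₁, hb₁, hb₁C₁⟩ := exists_of_ssubset
    ((hcover ▸ subset_union_left : C₁ ⊆ B).ssubset_of_ne (Ne.symm hne₁₂.1))
  obtain ⟨b₂, hb₂, hb₂C₂⟩ := exists_of_ssubset
    ((hcover ▸ subset_union_right : C₂ ⊆ B).ssubset_of_ne (Ne.symm hne₁₂.2))
  have hb₁C₂ : b₁ ∈ C₂ := ((hcover ▸ hb₁ : b₁ ∈ C₁ ∪ C₂)).resolve_left hb₁C₁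
  have hb₂C₁ : b₂ ∈ C₁ := ((hcover ▸ hb₂ : b₂ ∈ C₁ ∪ C₂)).resolve_right hb₂C₂
  rcases hc.total hb₁ hb₂ with h | h
  · exact hb₁C₁ (h₁ hb₂C₁ h)
  · exact hb₂C₂ (h₂ hb₁C₂ h)

theorem nonSober_of_isChain [Preorder W] {B : Set W} (hB : IsDownClosed B) (hne : B.Nonempty)
    (hc : IsChain (· ≤ ·) B) (hmax : ∀ m, ¬ IsGreatest B m) : NonSober B :=
  ⟨isIrredClosed_of_isChain hB hne hc, fun ⟨x, hx⟩ => hmax x ⟨hx ▸ le_refl x, hx ▸ fun _ h => h⟩⟩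

end General

section PrefixOrder

variable {Z : Type*} [Preorder Z]

theorem IsIrredClosed.isChain (hZ : IsPrefixOrder Z) {F : Set Z} (hF : IsIrredClosed F) :
    IsChain (· ≤ ·) F := by
  intro a ha b hb _
  by_contra! hab
  have hcover : F = {z ∈ F | ¬ a ≤ z} ∪ {z ∈ F | ¬ b ≤ z} := by
    refine Subset.antisymm (fun z hz => ?_) (union_subset (sep_subset _ _) (sep_subset _ _))
    have hz' : ¬ (a ≤ z ∧ b ≤ z) := fun ⟨haz, hbz⟩ => (hZ z a b haz hbz).elim hab.1 hab.2
    exact (not_and_or.1 hz').imp (fun h => ⟨hz, h⟩) (fun h => ⟨hz, h⟩)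
  have hdown : ∀ c, IsDownClosed {z ∈ F | ¬ c ≤ z} := fun _ _ hz _ hyz =>
    ⟨hF.1 hz.1 hyz, fun hcy => hz.2 (hcy.trans hyz)⟩
  rcases hF.2.2 _ _ (hdown a) (hdown b) hcover with h | h
  · exact (h.subset ha).2 le_rfl
  · exact (h.subset hb).2 le_rfl

theorem NonSober.not_bddAbove (hZ : IsPrefixOrder Z) (hfin : ∀ x : Z, (Iic x).Finite)
    {B : Set Z} (hB : NonSober B) : ¬ BddAbove B := by
  rintro ⟨u, hu⟩
  obtain ⟨m, hm⟩ := exists_isGreatest_of_directedOn_of_finite (hB.1.isChain hZ).directedOn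
    ((hfin u).subset hu) hB.1.2.1
  exact hB.2 ⟨m, Subset.antisymm hm.2 fun z hz => hB.1.1 hm.1 hz⟩

theorem NonSober.eq_of_subset (hZ : IsPrefixOrder Z) (hfin : ∀ x : Z, (Iic x).Finite)
    {F B : Set Z} (hF : NonSober F) (hB : NonSober B) (hFB : F ⊆ B) : F = B := by
  refine hFB.antisymm fun b hb => by_contra fun hbF => hF.not_bddAbove hZ hfin ⟨b, fun f hf => ?_⟩
  exact ((hB.1.isChain hZ).total (hFB hf) hb).resolve_right fun hbf => hbF (hF.1.1 hf hbf)

end PrefixOrder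

namespace Extended

variable {Z : Type*} [PartialOrder Z]

abbrev of (x : Z) : Extended Z := Sum.inl x

abbrev limit (B : {C : Set Z // NonSober C}) : Extended Z := Sum.inr B

@[elab_as_elim, induction_eliminator]
protected def recOfLimit {motive : Extended Z → Sort*} (w : Extended Z)
    (of : ∀ x, motive (of x)) (limit : ∀ B, motive (limit B)) : motive w :=
  match w with
  | Sum.inl x => of x
  | Sum.inr B => limit B

variable {x y : Z} {F G : {C : Set Z // NonSober C}}

theorem of_le_of : of x ≤ of y ↔ x ≤ y := Iff.rfl

theorem of_le_limit : of x ≤ limit F ↔ x ∈ F.1 := Iff.rfl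

theorem not_limit_le_of : ¬ limit F ≤ of x := id

theorem limit_le_limit : limit F ≤ limit G ↔ F = G := Iff.rfl

theorem isPrefixOrder (hZ : IsPrefixOrder Z) : IsPrefixOrder (Extended Z)
  | Sum.inl x, Sum.inl y, Sum.inl z, hy, hz => hZ x y z hy hz
  | Sum.inr F, Sum.inl _, Sum.inl _, hy, hz => (F.2.1.isChain hZ).total hy hz
  | Sum.inr _, Sum.inr _, _, hy, hz => Or.inr (hy ▸ hz)
  | Sum.inr _, _, Sum.inr _, hy, hz => Or.inl (hz ▸ hy)
  | Sum.inl _, Sum.inr _, _, hy, _ => (not_limit_le_of hy).elim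
  | Sum.inl _, _, Sum.inr _, _, hz => (not_limit_le_of hz).elim

theorem finite_Iic_of (hfin : ∀ x : Z, (Iic x).Finite) (u : Z) : (Iic (of u)).Finite := by
  refine ((hfin u).image of).subset fun w hw => ?_
  induction w with
  | of z => exact ⟨z, hw, rfl⟩
  | limit F => exact (not_limit_le_of (x := u) (F := F) hw).elim

theorem isLUB_image_of (hZ : IsPrefixOrder Z) (hfin : ∀ x : Z, (Iic x).Finite) {B : Set Z}
    (hB : NonSober B) : IsLUB (of '' B) (limit ⟨B, hB⟩) := by
  refine ⟨fun _ ⟨b, hb, hbw⟩ => hbw ▸ hb, fun w hw => ?_⟩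
  induction w with
  | of u => exact (hB.not_bddAbove hZ hfin ⟨u, fun b hb => hw ⟨b, hb, rfl⟩⟩).elim
  | limit F => exact Subtype.ext (hB.eq_of_subset hZ hfin F.2 fun b hb => hw ⟨b, hb, rfl⟩)

theorem dirSupInacc_Ici_of (hZ : IsPrefixOrder Z) (hfin : ∀ x : Z, (Iic x).Finite) (b : Z) :
    DirSupInacc (Ici (of b)) := by
  intro D hne hdir s hs hbs
  induction s with
  | of u =>
    exact ⟨_, mem_of_isLUB_of_directedOn_of_finite hs hdir
      ((finite_Iic_of hfin u).subset hs.1) hne, hbs⟩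
  | limit F =>
    by_cases hF : limit F ∈ D
    · exact ⟨_, hF, hbs⟩
    by_contra hnone
    refine not_limit_le_of (hs.2 fun d hd => ?_ : limit F ≤ of b)
    induction d with
    | of z =>
      exact ((F.2.1.isChain hZ).total (hs.1 hd) hbs).resolve_right fun hbz => hnone ⟨_, hd, hbz⟩
    | limit G => exact (hF (limit_le_limit.1 (hs.1 hd) ▸ hd)).elim

variable [TopologicalSpace (Extended Z)] [IsScott (Extended Z) univ]

theorem isOpen_Ici_of (hZ : IsPrefixOrder Z) (hfin : ∀ x : Z, (Iic x).Finite) (b : Z) :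
    IsOpen (Ici (of b)) :=
  IsScott.isOpen_iff_isUpperSet_and_dirSupInaccOn (D := univ) |>.2
    ⟨isUpperSet_Ici _, (dirSupInacc_Ici_of hZ hfin b).dirSupInaccOn⟩

theorem exists_eq_Iic_of_isIrreducible (hZ : IsPrefixOrder Z) (hfin : ∀ x : Z, (Iic x).Finite)
    {S : Set (Extended Z)} (hS : IsIrreducible S) (hSc : IsClosed S) : ∃ x, S = Iic x := by
  have hlow : IsLowerSet S := IsScott.isLowerSet_of_isClosed hSc
  set B : Set Z := of ⁻¹' S
  have hBlow : IsDownClosed B := fun _ ha _ hba => hlow (of_le_of.2 hba) ha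
  have hlimit : ∀ F, limit F ∈ S → F.1 ⊆ B := fun _ hF _ hf => hlow (of_le_limit.2 hf) hF
  have hBne : B.Nonempty := by
    obtain ⟨w, hw⟩ := hS.nonempty
    induction w with
    | of z => exact ⟨z, hw⟩
    | limit F => exact F.2.1.2.1.mono (hlimit F hw)
  have hBchain : IsChain (· ≤ ·) B := by
    intro a ha b hb _
    obtain ⟨w, -, haw, hbw⟩ := hS.2 _ _ (isOpen_Ici_of hZ hfin a) (isOpen_Ici_of hZ hfin b)
      ⟨_, ha, le_rfl⟩ ⟨_, hb, le_rfl⟩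
    exact isPrefixOrder hZ w (of a) (of b) haw hbw
  by_cases hmax : ∃ m, IsGreatest B m
  · obtain ⟨m, hm⟩ := hmax
    refine ⟨of m, Subset.antisymm (fun w hw => ?_) (hlow.Iic_subset hm.1)⟩
    induction w with
    | of z => exact hm.2 hw
    | limit F => exact (F.2.not_bddAbove hZ hfin ⟨m, fun f hf => hm.2 (hlimit F hw hf)⟩).elim
  · have hB : NonSober B := nonSober_of_isChain hBlow hBne hBchain (not_exists.1 hmax)
    have hBS : limit ⟨B, hB⟩ ∈ S :=
      IsScott.dirSupClosed_of_isClosed hSc (image_subset_iff.2 subset_rfl) (hBne.image of)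
        (hBchain.image_of_map_rel _ _ of fun _ _ => id).directedOn (isLUB_image_of hZ hfin hB)
    refine ⟨limit ⟨B, hB⟩, Subset.antisymm (fun w hw => ?_) (hlow.Iic_subset hBS)⟩
    induction w with
    | of z => exact hw
    | limit F => exact Subtype.ext (F.2.eq_of_subset hZ hfin hB (hlimit F hw))

end Extended

theorem stmt12 {Z : Type*} [PartialOrder Z]
    (hpre : ∀ x y z : Z, y ≤ x → z ≤ x → y ≤ z ∨ z ≤ y)
    (hsimple : ∀ x : Z, {y : Z | y ≤ x}.Finite)
    (C : Set (Extended Z)) (hC : ScottClosed C) (hne : C.Nonempty)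
    (hirr : ∀ C₁ C₂ : Set (Extended Z), ScottClosed C₁ → ScottClosed C₂ →
      C = C₁ ∪ C₂ → C = C₁ ∨ C = C₂) :
    ∃! x : Extended Z, x ∈ C ∧
      ∀ C' : Set (Extended Z), ScottClosed C' → x ∈ C' → C ⊆ C' := by
  let : TopologicalSpace (Extended Z) := Topology.scott (Extended Z) univ
  have : IsScott (Extended Z) univ := ⟨rfl⟩
  rw [scottClosed_iff_isClosed] at hC
  have hCirr : IsIrreducible C := isIrreducible_of_forall_eq_union hC hne fun C₁ C₂ h₁ h₂ =>
    hirr C₁ C₂ (scottClosed_iff_isClosed.2 h₁) (scottClosed_iff_isClosed.2 h₂)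
  obtain ⟨x, rfl⟩ := Extended.exists_eq_Iic_of_isIrreducible hpre hsimple hCirr hC
  refine ⟨x, ⟨self_mem_Iic, fun C' hC' hx => ?_⟩, fun y ⟨hy, hmin⟩ => ?_⟩
  · exact (IsScott.isLowerSet_of_isClosed (scottClosed_iff_isClosed.1 hC')).Iic_subset hx
  · exact le_antisymm hy
      (hmin _ (scottClosed_iff_isClosed.2 isClosed_Iic) self_mem_Iic self_mem_Iic)

end PaperBB
end

section
/- Let (X, ⪯) be a prefix order with the Alexandroff topology, and let μ be a locally finite, Scott-continuous valuation on the open (i.e., upward-closed) subsets of X. Define μ̃ on the Scott-open subsets V of X∞ by μ̃(V) = μ(V ∩ X) (where V ∩ X is Alexandroff-open in X). Then μ̃ is a Scott-continuous valuation on the Scott topology of X∞; and if X is simple, then μ̃ is locally finite. -/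
open scoped Classical ENNReal

namespace PaperBB

section Valuation

variable {V W : Type*} {Op : Set (Set W)} {Op' : Set (Set V)} {μ : Set W → ℝ≥0∞} {f : W → V}

theorem IsValuationOn.comp_preimage (hμ : IsValuationOn Op μ) (hf : ∀ U ∈ Op', f ⁻¹' U ∈ Op) :
    IsValuationOn Op' (fun U => μ (f ⁻¹' U)) := by
  refine ⟨by simpa only [Set.preimage_empty] using hμ.1,
    fun U hU U' hU' hUU' => hμ.2.1 _ (hf U hU) _ (hf U' hU') (Set.preimage_mono hUU'),
    fun U hU U' hU' => ?_⟩
  simpa only [Set.preimage_union, Set.preimage_inter] using hμ.2.2 _ (hf U hU) _ (hf U' hU')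

theorem IsScottContinuousOn.comp_preimage (hμ : IsScottContinuousOn Op μ)
    (hf : ∀ U ∈ Op', f ⁻¹' U ∈ Op) : IsScottContinuousOn Op' (fun U => μ (f ⁻¹' U)) := by
  intro 𝒟 hne hOp hdir
  have h := hμ (Set.preimage f '' 𝒟) (hne.image _) (Set.forall_mem_image.2 fun U hU => hf U (hOp U hU))
    (hdir.mono_comp fun _ _ => Set.preimage_mono)
  rwa [Set.sUnion_image, iSup_image, ← Set.preimage_iUnion₂, ← Set.sUnion_eq_biUnion] at h

theorem IsLocallyFiniteOn.apply_Ici_lt_top [Preorder W] (hμ : IsValuationOn (UpClosedSets W) μ)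
    (hlf : IsLocallyFiniteOn (UpClosedSets W) μ) (x : W) : μ (Set.Ici x) < ⊤ := by
  obtain ⟨U, hU, hxU, hU_lt⟩ := hlf x
  exact (hμ.2.1 _ (fun _ _ hy hyz => le_trans hy hyz) _ hU fun _ hy => hU hxU hy).trans_lt hU_lt

end Valuation

theorem _root_.DirectedOn.exists_isGreatest_of_finite {W : Type*} [Preorder W] {s : Set W}
    (hdir : DirectedOn (· ≤ ·) s) (hne : s.Nonempty) (hfin : s.Finite) :
    ∃ m, IsGreatest s m := by
  have := hne.to_subtype
  have := hfin.to_subtype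
  obtain ⟨m, hm⟩ := hdir.directed_val.finite_le id
  exact ⟨m, m.2, fun x hx => hm ⟨x, hx⟩⟩

theorem isIrredClosed_lowerClosure {W : Type*} [Preorder W] {s : Set W}
    (hdir : DirectedOn (· ≤ ·) s) (hne : s.Nonempty) :
    IsIrredClosed (lowerClosure s : Set W) := by
  refine ⟨fun _ hx _ hyx => (lowerClosure s).lower hyx hx,
    hne.mono subset_lowerClosure, fun C₁ C₂ h₁ h₂ hC => ?_⟩
  by_contra! hne₁₂
  -- points outside `C₁` and outside `C₂` have a common upper bound in `s`, which lies in neither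
  obtain ⟨a, ⟨da, hda, hada⟩, ha₁⟩ : ∃ a ∈ (lowerClosure s : Set W), a ∉ C₁ := by
    by_contra! h; exact hne₁₂.1 (Set.Subset.antisymm h (hC ▸ Set.subset_union_left))
  obtain ⟨b, ⟨db, hdb, hbdb⟩, hb₂⟩ : ∃ b ∈ (lowerClosure s : Set W), b ∉ C₂ := by
    by_contra! h; exact hne₁₂.2 (Set.Subset.antisymm h (hC ▸ Set.subset_union_right))
  obtain ⟨e, he, hdae, hdbe⟩ := hdir da hda db hdb
  rcases (hC ▸ subset_lowerClosure he : e ∈ C₁ ∪ C₂) with he₁ | he₂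
  · exact ha₁ (h₁ he₁ (hada.trans hdae))
  · exact hb₂ (h₂ he₂ (hbdb.trans hdbe))

namespace Extended

variable {Z : Type*} [PartialOrder Z]

-- An ascription `(Sum.inl x : Extended Z)` on the left of `≤` still elaborates the inequality in
-- the order of `Z ⊕ _`; hence inequalities are written with an `Extended Z`-typed left-hand side
-- or with `(α := Extended Z)`.

theorem exists_eq_inl_of_le_inl {w : Extended Z} {y : Z} (h : w ≤ Sum.inl y) :
    ∃ z ≤ y, w = Sum.inl z := by
  cases w with
  | inl z => exact ⟨z, h, rfl⟩
  | inr _ => exact h.elim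

theorem exists_ge_inl (w : Extended Z) : ∃ z : Z, w ≥ Sum.inl z := by
  cases w with
  | inl z => exact ⟨z, le_refl z⟩
  | inr C => exact C.2.1.2.1

variable {D : Set (Extended Z)}

theorem inl_mem_of_isLUB {y : Z} (hfin : {z : Z | z ≤ y}.Finite) (hne : D.Nonempty)
    (hdir : DirectedOn (· ≤ ·) D) (hlub : IsLUB D (Sum.inl y)) : Sum.inl y ∈ D := by
  have hDfin : D.Finite := (hfin.image Sum.inl).subset fun d hd => by
    obtain ⟨z, hzy, rfl⟩ := exists_eq_inl_of_le_inl (hlub.1 hd)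
    exact ⟨z, hzy, rfl⟩
  obtain ⟨m, hm⟩ := hdir.exists_isGreatest_of_finite hne hDfin
  exact hm.isLUB.unique hlub ▸ hm.1

theorem val_eq_lowerClosure_of_isLUB {C : {C : Set Z // NonSober C}} (hne : D.Nonempty)
    (hdir : DirectedOn (· ≤ ·) D) (hlub : IsLUB D (Sum.inr C)) (hC : Sum.inr C ∉ D) :
    C.1 = lowerClosure (Sum.inl ⁻¹' D) := by
  have hinl : ∀ d ∈ D, ∃ z, d = Sum.inl z := fun d hd => by
    cases d with
    | inl z => exact ⟨z, rfl⟩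
    | inr E => exact absurd ((hlub.1 hd : E = C) ▸ hd) hC
  have hdir' : DirectedOn (· ≤ ·) (Sum.inl ⁻¹' D : Set Z) := fun a ha b hb => by
    obtain ⟨c, hc, hac, hbc⟩ := hdir _ ha _ hb
    obtain ⟨z, rfl⟩ := hinl c hc
    exact ⟨z, hc, hac, hbc⟩
  have hne' : (Sum.inl ⁻¹' D : Set Z).Nonempty := by
    obtain ⟨d, hd⟩ := hne
    obtain ⟨z, rfl⟩ := hinl d hd
    exact ⟨z, hd⟩
  set L : Set Z := ↑(lowerClosure (Sum.inl ⁻¹' D))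
  have hle_of_ub : ∀ w : Extended Z, (∀ z ∈ L, w ≥ Sum.inl z) → w ≥ Sum.inr C :=
    fun w hw => hlub.2 fun d hd => by
      obtain ⟨z, rfl⟩ := hinl d hd
      exact hw z (subset_lowerClosure hd)
  -- `L` is not principal: an upper bound `Sum.inl m` of `D` would lie above `Sum.inr C`
  have hL : NonSober L :=
    ⟨isIrredClosed_lowerClosure hdir' hne', fun ⟨m, hm⟩ => hle_of_ub (Sum.inl m) (hm ▸ fun _ => id)⟩
  exact congrArg Subtype.val (hle_of_ub (Sum.inr ⟨L, hL⟩) fun _ => id : C = ⟨L, hL⟩)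

theorem scottOpen_Ici_inl (hfin : ∀ x : Z, {y : Z | y ≤ x}.Finite) (x : Z) :
    ScottOpen (Set.Ici (α := Extended Z) (Sum.inl x)) := by
  refine ⟨fun _ _ ha hab => le_trans ha hab, fun D hne hdir s hlub hs => ?_⟩
  cases s with
  | inl y => exact ⟨_, inl_mem_of_isLUB (hfin y) hne hdir hlub, hs⟩
  | inr C =>
    by_cases hC : Sum.inr C ∈ D
    · exact ⟨_, hC, hs⟩
    · obtain ⟨d, hd, hxd⟩ : x ∈ (lowerClosure (Sum.inl ⁻¹' D) : Set Z) :=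
        val_eq_lowerClosure_of_isLUB hne hdir hlub hC ▸ hs
      exact ⟨Sum.inl d, hd, hxd⟩

theorem preimage_inl_mem_upClosedSets {V : Set (Extended Z)} (hV : ScottOpen V) :
    Sum.inl ⁻¹' V ∈ UpClosedSets Z :=
  fun _ _ hx hxy => hV.1 hx hxy

end Extended

theorem stmt13_general {Z : Type*} [PartialOrder Z]
    (μ : Set Z → ℝ≥0∞)
    (hval : IsValuationOn (UpClosedSets Z) μ)
    (hsc : IsScottContinuousOn (UpClosedSets Z) μ)
    (hlf : IsLocallyFiniteOn (UpClosedSets Z) μ) :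
    IsValuationOn (ScottOpens (Extended Z)) (fun V => μ (Sum.inl ⁻¹' V)) ∧
    IsScottContinuousOn (ScottOpens (Extended Z)) (fun V => μ (Sum.inl ⁻¹' V)) ∧
    ((∀ x : Z, {y : Z | y ≤ x}.Finite) →
      IsLocallyFiniteOn (ScottOpens (Extended Z)) (fun V => μ (Sum.inl ⁻¹' V))) := by
  have hopen : ∀ V ∈ ScottOpens (Extended Z), Sum.inl ⁻¹' V ∈ UpClosedSets Z :=
    fun _ => Extended.preimage_inl_mem_upClosedSets
  refine ⟨hval.comp_preimage hopen, hsc.comp_preimage hopen, fun hfin w => ?_⟩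
  obtain ⟨z, hzw⟩ := Extended.exists_ge_inl w
  exact ⟨_, Extended.scottOpen_Ici_inl hfin z, hzw, hlf.apply_Ici_lt_top hval z⟩

theorem stmt13 {Z : Type*} [PartialOrder Z]
    (hpre : ∀ x y z : Z, y ≤ x → z ≤ x → y ≤ z ∨ z ≤ y)
    (μ : Set Z → ℝ≥0∞)
    (hval : IsValuationOn (UpClosedSets Z) μ)
    (hsc : IsScottContinuousOn (UpClosedSets Z) μ)
    (hlf : IsLocallyFiniteOn (UpClosedSets Z) μ) :
    IsValuationOn (ScottOpens (Extended Z)) (fun V => μ (Sum.inl ⁻¹' V)) ∧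
    IsScottContinuousOn (ScottOpens (Extended Z)) (fun V => μ (Sum.inl ⁻¹' V)) ∧
    ((∀ x : Z, {y : Z | y ≤ x}.Finite) →
      IsLocallyFiniteOn (ScottOpens (Extended Z)) (fun V => μ (Sum.inl ⁻¹' V))) :=
  stmt13_general μ hval hsc hlf

end PaperBB
end

section
/- Let (X, A_τ, P) be a fully probabilistic transition system, p a path on X, and U ⊆ Path(X) a separated set of paths (U = U*, i.e., no two distinct elements of U are ⪯-comparable) such that p ⪯ q for all q ∈ U. Then Σ_{q ∈ U} μ_P(q) ≤ μ_P(p). -/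
open scoped Classical ENNReal

namespace PaperBB

/-!
Induct on how far the paths of a finite subset `F` of `U` reach beyond `p`. If `p ∈ F`, separation
forces `F = {p}`. Otherwise every path of `F` extends `p` by at least one transition `s = (a, x)`;
grouping `F` by that transition, each group is a separated set above `p·s`, and
`μ(p·s) ≤ μ(p) · P(last p, a, x)`. Summing over `s` gives at most `μ(p)`, because the outgoing
probabilities of a state sum to at most `1`.
-/

section PathWeightBound

variable {A X : Type*}

namespace Path

theorem eq_of_le_of_length_le {p q : Path A X} (h : p.le q)
    (hl : q.word.length ≤ p.word.length) : q = p := by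
  obtain ⟨hw, he⟩ := h
  obtain ⟨w, f⟩ := p
  obtain ⟨w', f'⟩ := q
  obtain rfl : w = w' := hw.eq_of_length_le hl
  simp only [Path.mk.injEq, heq_eq_eq, true_and]
  funext ⟨σ, hσ⟩
  exact he σ hσ

theorem fn_take_of_le {p q : Path A X} (h : p.le q) {j : ℕ} (hj : j ≤ p.word.length) :
    q.fn ⟨q.word.take j, List.take_prefix _ _⟩ = p.fn ⟨p.word.take j, List.take_prefix _ _⟩ := by
  obtain ⟨t, ht⟩ := h.1
  have htake : q.word.take j = p.word.take j := by
    rw [← ht, List.take_append_of_le_length hj]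
  exact (congrArg q.fn (Subtype.ext htake)).trans (h.2 _ _)

noncomputable def snoc (p : Path A X) (s : Option A × X) : Path A X where
  word := p.word ++ [s.1]
  fn := fun σ => if h : σ.1 <+: p.word then p.fn ⟨σ.1, h⟩ else s.2

theorem le_snoc (p : Path A X) (s : Option A × X) : p.le (p.snoc s) :=
  ⟨⟨[s.1], rfl⟩, fun _ hσ => dif_pos hσ⟩

theorem snoc_last (p : Path A X) (s : Option A × X) : (p.snoc s).last = s.2 :=
  dif_neg fun hp => by simpa [snoc] using hp.length_le

/-- The transition taken by `q` out of its prefix of length `n`. -/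
def step (q : Path A X) (n : ℕ) : Option A × X :=
  (q.word.getD n none, q.fn ⟨q.word.take (n + 1), List.take_prefix _ _⟩)

theorem snoc_step_le {p q : Path A X} (h : p.le q) (hlt : p.word.length < q.word.length) :
    (p.snoc (q.step p.word.length)).le q := by
  obtain ⟨t, ht⟩ := h.1
  have hword : p.word ++ [q.word.getD p.word.length none] = q.word.take (p.word.length + 1) := by
    rw [← ht] at hlt ⊢
    rw [List.take_add_one, List.take_left, List.getD_eq_getElem _ _ hlt,
      List.getElem?_eq_getElem hlt]
    rfl
  have hpre : p.word ++ [q.word.getD p.word.length none] <+: q.word :=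
    hword ▸ List.take_prefix _ _
  refine ⟨hpre, fun σ hσ => ?_⟩
  rcases List.prefix_concat_iff.mp hσ with rfl | hσp
  · exact (congrArg q.fn (Subtype.ext hword)).trans (p.snoc_last (q.step _)).symm
  · exact (h.2 σ hσp).trans ((p.le_snoc _).2 σ hσp).symm

end Path

theorem IsExec.of_le {S : FPTS A X} {x : X} {p q : Path A X} (hq : IsExec S x q) (h : p.le q) :
    IsExec S x p := by
  obtain ⟨hw, he⟩ := h
  refine ⟨(he [] (Path.nilPrefix _)).symm.trans hq.1, fun σ a hσ => ?_⟩
  rw [← he σ ((Path.prefixSnoc σ a).trans hσ), ← he (σ ++ [a]) hσ]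
  exact hq.2 σ a (hσ.trans hw)

noncomputable def stepWeight (S : FPTS A X) (p : Path A X) (i : ℕ) : ℝ≥0∞ :=
  S.P (p.fn ⟨p.word.take i, List.take_prefix _ _⟩) (p.word.getD i none)
    (p.fn ⟨p.word.take (i + 1), List.take_prefix _ _⟩)

theorem pathWeight_eq_prod_stepWeight (S : FPTS A X) {p : Path A X} (h : ∃ x, IsExec S x p) :
    pathWeight S p = ∏ i ∈ Finset.range p.word.length, stepWeight S p i := by
  rw [pathWeight, if_pos h, ← Fin.prod_univ_eq_prod_range (stepWeight S p)]
  refine Finset.prod_congr rfl fun i _ => ?_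
  simp [stepWeight]

theorem stepWeight_of_le (S : FPTS A X) {p q : Path A X} (h : p.le q) {i : ℕ}
    (hi : i < p.word.length) : stepWeight S q i = stepWeight S p i := by
  obtain ⟨t, ht⟩ := h.1
  have hget : q.word.getD i none = p.word.getD i none := by
    rw [← ht, List.getD_append _ _ _ _ hi]
  rw [stepWeight, stepWeight, Path.fn_take_of_le h hi.le, Path.fn_take_of_le h hi, hget]

theorem stepWeight_snoc_length (S : FPTS A X) (p : Path A X) (s : Option A × X) :
    stepWeight S (p.snoc s) p.word.length = S.P p.last s.1 s.2 := by
  have hsrc : (p.snoc s).fn ⟨(p.snoc s).word.take p.word.length, List.take_prefix _ _⟩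
      = p.last := by
    rw [Path.fn_take_of_le (p.le_snoc s) le_rfl]
    exact congrArg p.fn (Subtype.ext (List.take_length))
  have htgt : (p.snoc s).fn ⟨(p.snoc s).word.take (p.word.length + 1), List.take_prefix _ _⟩
      = s.2 := by
    rw [← p.snoc_last s]
    exact congrArg _ (Subtype.ext (List.take_of_length_le (by simp [Path.snoc])))
  have hget : (p.snoc s).word.getD p.word.length none = s.1 := by
    simp [Path.snoc]
  rw [stepWeight, hsrc, htgt, hget]

theorem pathWeight_snoc_le (S : FPTS A X) (p : Path A X) (s : Option A × X) :
    pathWeight S (p.snoc s) ≤ pathWeight S p * S.P p.last s.1 s.2 := by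
  by_cases hex : ∃ y, IsExec S y (p.snoc s)
  · have hp : ∃ y, IsExec S y p := hex.imp fun y hy => hy.of_le (p.le_snoc s)
    have hlen : (p.snoc s).word.length = p.word.length + 1 := by simp [Path.snoc]
    rw [pathWeight_eq_prod_stepWeight S hex, pathWeight_eq_prod_stepWeight S hp, hlen,
      Finset.prod_range_succ, stepWeight_snoc_length,
      Finset.prod_congr rfl fun i hi => stepWeight_of_le S (p.le_snoc s) (Finset.mem_range.mp hi)]
  · rw [pathWeight, if_neg hex]
    exact zero_le

theorem sum_pathWeight_snoc_le (S : FPTS A X) (p : Path A X) (K : Finset (Option A × X)) :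
    ∑ s ∈ K, pathWeight S (p.snoc s) ≤ pathWeight S p := by
  have hout : ∑ s ∈ K, S.P p.last s.1 s.2 ≤ 1 := by
    refine (ENNReal.sum_le_tsum K).trans ?_
    rcases S.total p.last with h | h <;> simp [h]
  calc ∑ s ∈ K, pathWeight S (p.snoc s)
      ≤ ∑ s ∈ K, pathWeight S p * S.P p.last s.1 s.2 :=
        Finset.sum_le_sum fun s _ => pathWeight_snoc_le S p s
    _ = pathWeight S p * ∑ s ∈ K, S.P p.last s.1 s.2 := (Finset.mul_sum ..).symm
    _ ≤ pathWeight S p := mul_le_of_le_one_right' hout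

theorem sum_pathWeight_le_of_length_le (S : FPTS A X) (N : ℕ) {p : Path A X}
    {F : Finset (Path A X)} (hlb : ∀ q ∈ F, p.le q) (hsep : ∀ q ∈ F, ∀ q' ∈ F, q.le q' → q = q')
    (hlen : ∀ q ∈ F, q.word.length ≤ p.word.length + N) :
    ∑ q ∈ F, pathWeight S q ≤ pathWeight S p := by
  induction N generalizing p F with
  | zero =>
    have hF : F ⊆ {p} := fun q hq =>
      Finset.mem_singleton.2 (Path.eq_of_le_of_length_le (hlb q hq) (hlen q hq))
    simpa using Finset.sum_le_sum_of_subset hF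
  | succ N ih =>
    by_cases hpF : p ∈ F
    · have hF : F ⊆ {p} := fun q hq =>
        Finset.mem_singleton.2 (hsep p hpF q hq (hlb q hq)).symm
      simpa using Finset.sum_le_sum_of_subset hF
    have hlt : ∀ q ∈ F, p.word.length < q.word.length := fun q hq =>
      lt_of_not_ge fun hle => hpF (Path.eq_of_le_of_length_le (hlb q hq) hle ▸ hq)
    set next := fun q : Path A X => q.step p.word.length
    calc ∑ q ∈ F, pathWeight S q
        = ∑ s ∈ F.image next, ∑ q ∈ F with next q = s, pathWeight S q :=
          (Finset.sum_fiberwise_of_maps_to (fun q hq => Finset.mem_image_of_mem next hq) _).symm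
      _ ≤ ∑ s ∈ F.image next, pathWeight S (p.snoc s) := by
          refine Finset.sum_le_sum fun s _ => ih ?_ ?_ ?_ <;>
            simp only [Finset.mem_filter, and_imp]
          · rintro q hq rfl
            exact Path.snoc_step_le (hlb q hq) (hlt q hq)
          · exact fun q hq _ q' hq' _ => hsep q hq q' hq'
          · intro q hq _
            have := hlen q hq
            simp only [Path.snoc, List.length_append, List.length_singleton]
            omega
      _ ≤ pathWeight S p := sum_pathWeight_snoc_le S p _

theorem sum_pathWeight_le_of_forall_le (S : FPTS A X) {p : Path A X} {F : Finset (Path A X)}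
    (hlb : ∀ q ∈ F, p.le q) (hsep : ∀ q ∈ F, ∀ q' ∈ F, q.le q' → q = q') :
    ∑ q ∈ F, pathWeight S q ≤ pathWeight S p :=
  sum_pathWeight_le_of_length_le S (F.sup (·.word.length)) hlb hsep fun _ hq =>
    (Finset.le_sup (f := (·.word.length)) hq).trans (Nat.le_add_left _ _)

end PathWeightBound

theorem stmt17_general {A X : Type*} (S : FPTS A X)
    (p : Path A X) (U : Set (Path A X))
    (hsep : ∀ q ∈ U, ∀ q' ∈ U, q.le q' → q = q')
    (hlb : ∀ q ∈ U, p.le q) :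
    ∑' q : U, pathWeight S q.1 ≤ pathWeight S p := by
  rw [ENNReal.tsum_eq_iSup_sum]
  refine iSup_le fun s => ?_
  refine (Finset.sum_map s (Function.Embedding.subtype (· ∈ U)) (pathWeight S)).symm.le.trans ?_
  refine sum_pathWeight_le_of_forall_le S ?_ ?_ <;> simp only [Finset.mem_map,
    Function.Embedding.coe_subtype, forall_exists_index, and_imp]
  · rintro _ q _ rfl
    exact hlb q q.2
  · rintro _ q _ rfl _ q' _ rfl
    exact hsep q q.2 q' q'.2

theorem stmt17 {A X : Type*} [Countable A] [Countable X] (S : FPTS A X)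
    (p : Path A X) (U : Set (Path A X))
    (hsep : ∀ q ∈ U, ∀ q' ∈ U, q.le q' → q = q')
    (hlb : ∀ q ∈ U, p.le q) :
    ∑' q : U, pathWeight S q.1 ≤ pathWeight S p :=
  stmt17_general S p U hsep hlb

end PaperBB
end
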